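/- Closeness of the approximate rarefaction wave to the self-similar fan inside the fan region (Lemma 2.2, part (6)): For every ε ∈ (0,1) there exists a positive constant C_ε such that for all t ≥ 1 and all x with λ_m t ≤ x ≤ λ_+ t: |u^R(t,x) − u^r(x/t)| ≤ C_ε δ_R^{ε} t^{−1+ε}. -/

import Mathlib

/-!
Let `y = x₀(t, x)` be the foot of the characteristic through `(t, x)`. Then
`x / t - w₀(y) = y / t`, and since both speeds lie in `[λ_m, λ₊]`, where `√(· / 3)` is
`1 / (6 u_m)`-Lipschitz, `|u^R(t, x) - u^r(x / t)| ≤ |y| / (6 u_m t)`. Inside the fan the foot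
satisfies `|y| ≤ (λ₊ - λ_m) t / 2 · (1 - tanh |y|)`, and `1 - tanh s = 2 / (e^{2s} + 1)` turns this
into `e^{2|y|} ≤ 1 + 2 (λ₊ - λ_m) t`: the foot grows only logarithmically in `t`, and
`log (1 + z) ≤ z^ε / ε` for `ε ≤ 1` gives the factor `(δ_R t)^ε`.
-/

open Real Set

lemma abs_sqrt_sub_sqrt_le {a b c : ℝ} (hc : 0 < c) (ha : c ^ 2 ≤ a) (hb : c ^ 2 ≤ b) :
    |√a - √b| ≤ |a - b| / (2 * c) := by
  have hca : c ≤ √a := (le_sqrt' hc).2 ha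
  have hcb : c ≤ √b := (le_sqrt' hc).2 hb
  have hfactor : a - b = (√a - √b) * (√a + √b) := by
    rw [mul_comm, ← sq_sub_sq, sq_sqrt (by nlinarith), sq_sqrt (by nlinarith)]
  rw [le_div_iff₀ (by positivity), hfactor, abs_mul, abs_of_pos (by linarith : 0 < √a + √b)]
  gcongr
  linarith

lemma log_one_add_le_rpow_div {z ε : ℝ} (hz : 0 ≤ z) (hε : 0 < ε) (hε1 : ε ≤ 1) :
    log (1 + z) ≤ z ^ ε / ε := by
  rw [le_div_iff₀ hε, mul_comm, ← log_rpow (by positivity)]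
  calc log ((1 + z) ^ ε) ≤ log (1 + z ^ ε) := by
        gcongr
        simpa using rpow_add_le_add_rpow zero_le_one hz hε.le hε1
    _ ≤ z ^ ε := by linarith [log_le_sub_one_of_pos (by positivity : 0 < 1 + z ^ ε)]

lemma one_sub_tanh_eq (y : ℝ) : 1 - tanh y = 2 / (exp (2 * y) + 1) := by
  rw [tanh_eq, exp_neg, two_mul, exp_add]
  field_simp
  ring

lemma exp_two_mul_le_of_le_mul_one_sub_tanh {y c : ℝ} (hy : 0 ≤ y) (h : y ≤ c * (1 - tanh y)) :
    exp (2 * y) ≤ 1 + 4 * c := by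
  have hE := exp_pos (2 * y)
  have hmul : y * (exp (2 * y) + 1) ≤ 2 * c := by
    rw [one_sub_tanh_eq, mul_div_assoc', le_div_iff₀ (by positivity)] at h
    linarith
  -- `1 - 2y ≤ exp (-2y)`, multiplied by `exp (2y)`
  have hconvex : exp (2 * y) ≤ 1 + 2 * y * exp (2 * y) := by
    have := add_one_le_exp (-(2 * y))
    rw [exp_neg] at this
    rw [← sub_le_iff_le_add']
    nlinarith [mul_inv_cancel₀ hE.ne']
  nlinarith

noncomputable def tanhProfile (a b y : ℝ) : ℝ := (b + a) / 2 + (b - a) / 2 * tanh y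

lemma tanhProfile_mem_Icc {a b : ℝ} (hab : a ≤ b) (y : ℝ) : tanhProfile a b y ∈ Icc a b := by
  have := tanh_lt_one y
  have := neg_one_lt_tanh y
  constructor <;> unfold tanhProfile <;> nlinarith

lemma exp_two_mul_abs_le_of_tanhProfile {a b t y : ℝ}
    (hlo : a * t ≤ y + tanhProfile a b y * t) (hhi : y + tanhProfile a b y * t ≤ b * t) :
    exp (2 * |y|) ≤ 1 + 2 * (b - a) * t := by
  have hfoot : |y| ≤ (b - a) * t / 2 * (1 - tanh |y|) := by
    unfold tanhProfile at hlo hhi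
    rcases abs_cases y with ⟨hy, -⟩ | ⟨hy, -⟩ <;> rw [hy]
    · linarith
    · rw [tanh_neg]; linarith
  linarith [exp_two_mul_le_of_le_mul_one_sub_tanh (abs_nonneg y) hfoot]

lemma two_mul_abs_le_rpow_div_of_tanhProfile {a b t y ε : ℝ}
    (hlo : a * t ≤ y + tanhProfile a b y * t) (hhi : y + tanhProfile a b y * t ≤ b * t)
    (hε : 0 < ε) (hε1 : ε ≤ 1) :
    2 * |y| ≤ (2 * (b - a) * t) ^ ε / ε := by
  have hwidth : 0 ≤ 2 * (b - a) * t := by linarith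
  calc 2 * |y| ≤ log (1 + 2 * (b - a) * t) :=
        (le_log_iff_exp_le (by positivity)).2 (exp_two_mul_abs_le_of_tanhProfile hlo hhi)
    _ ≤ _ := log_one_add_le_rpow_div hwidth hε hε1

lemma abs_sqrt_div_three_sub_le_of_eq_add_mul {c t x y w : ℝ} (hc : 0 < c) (ht : 0 < t)
    (hchar : x = y + w * t) (hw : 3 * c ^ 2 ≤ w) (hx : 3 * c ^ 2 ≤ x / t) :
    |√(w / 3) - √(x / t / 3)| ≤ |y| / (6 * c * t) := by
  have hgap : w / 3 - x / t / 3 = -(y / (3 * t)) := by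
    rw [hchar]; field_simp; ring
  calc |√(w / 3) - √(x / t / 3)| ≤ |w / 3 - x / t / 3| / (2 * c) :=
        abs_sqrt_sub_sqrt_le hc (by linarith) (by linarith)
    _ = |y| / (6 * c * t) := by
        rw [hgap, abs_neg, abs_div, abs_of_pos (by positivity : 0 < 3 * t)]
        field_simp; ring

/-- Closeness of the approximate rarefaction wave to the self-similar fan inside the
fan region (Lemma 2.2, part (6)). -/
theorem rarefaction_inside_fan
    (um up lm lp dR : ℝ) (h0 : 0 < um) (hup : um < up)
    (hlm : lm = 3 * um ^ 2) (hlp : lp = 3 * up ^ 2) (hdR : dR = up - um)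
    (w0 : ℝ → ℝ) (hw0 : ∀ x, w0 x = (lp + lm) / 2 + (lp - lm) / 2 * Real.tanh x)
    (x0 : ℝ → ℝ → ℝ) (hx0 : ∀ t, 0 ≤ t → ∀ x, x = x0 t x + w0 (x0 t x) * t)
    (uR : ℝ → ℝ → ℝ) (huR : ∀ t x, uR t x = Real.sqrt (w0 (x0 t x) / 3))
    (ur : ℝ → ℝ)
    (hur : ∀ s, ur s = if s ≤ lm then um else if s ≤ lp then Real.sqrt (s / 3) else up) :
    ∀ ε : ℝ, 0 < ε → ε < 1 → ∃ C > 0, ∀ t : ℝ, 1 ≤ t →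
      ∀ x : ℝ, lm * t ≤ x → x ≤ lp * t →
        |uR t x - ur (x / t)| ≤ C * dR ^ ε * t ^ (-1 + ε) := by
  intro ε hε hε1
  obtain rfl : w0 = tanhProfile lm lp := funext hw0
  have hsum : 0 < up + um := by linarith
  refine ⟨(6 * (up + um)) ^ ε / (12 * ε * um), by positivity, fun t ht x hxlo hxhi => ?_⟩
  have htpos : 0 < t := by linarith
  set y := x0 t x
  have hchar : x = y + tanhProfile lm lp y * t := hx0 t htpos.le x
  have hs_lo : lm ≤ x / t := (le_div_iff₀ htpos).2 hxlo
  have hs_hi : x / t ≤ lp := (div_le_iff₀ htpos).2 hxhi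
  have hfan : ur (x / t) = √(x / t / 3) := by
    rw [hur]
    split_ifs with h1
    · rw [le_antisymm h1 hs_lo, hlm, mul_div_cancel_left₀ _ three_ne_zero, sqrt_sq h0.le]
    · rfl
  have hy : 2 * |y| ≤ (6 * (up + um) * dR * t) ^ ε / ε := by
    have hwidth : 2 * (lp - lm) * t = 6 * (up + um) * dR * t := by subst hlm hlp hdR; ring
    exact hwidth ▸
      two_mul_abs_le_rpow_div_of_tanhProfile (hchar ▸ hxlo) (hchar ▸ hxhi) hε hε1.le
  have hw_lo : lm ≤ tanhProfile lm lp y := (tanhProfile_mem_Icc (hs_lo.trans hs_hi) y).1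
  calc |uR t x - ur (x / t)| ≤ |y| / (6 * um * t) := by
        rw [huR, hfan]
        exact abs_sqrt_div_three_sub_le_of_eq_add_mul h0 htpos hchar (hlm ▸ hw_lo) (hlm ▸ hs_lo)
    _ ≤ (6 * (up + um) * dR * t) ^ ε / ε / (12 * um * t) := by
        rw [show |y| / (6 * um * t) = 2 * |y| / (12 * um * t) by field_simp; ring]
        gcongr
    _ = _ := by
        have hdR_nonneg : 0 ≤ dR := by linarith
        rw [mul_rpow (by positivity) htpos.le, mul_rpow (by positivity) hdR_nonneg,
          rpow_add htpos, rpow_neg_one]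
        field_simp
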